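/- arXiv:math/0408087 — 3 statements merged into one kernel-verified Lean document; each statement's English description precedes it below -/
import Mathlib

section
/- For every k, N ∈ ℕ, as r → 1⁻, |h(r·exp(2πik/2^N))| → ∞, where h(z) = ∑_{n=0}^∞ z^{2^n} on the unit disc. -/
/-!
Write `h z = ∑ z ^ 2 ^ n`. Peeling off the first `N` terms gives
`h z = ∑_{n<N} z ^ 2 ^ n + h (z ^ 2 ^ N)`. For `c = exp (2πik / 2 ^ N)` we have `c ^ 2 ^ N = 1`,
so `h (r c) = (N terms of modulus ≤ 1) + h (r ^ 2 ^ N)`, whence `‖h (r c)‖ ≥ h (r ^ 2 ^ N) - N`.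
On the real radius `h x ≥ ∑_{n<m} x ^ 2 ^ n → m` as `x → 1⁻`, for every `m`.
-/

open Filter Topology Finset

section LacunarySeries

variable {𝕜 : Type*} [NormedDivisionRing 𝕜] {x : 𝕜}

theorem summable_pow_two_pow [CompleteSpace 𝕜] (hx : ‖x‖ < 1) : Summable fun n : ℕ => x ^ 2 ^ n :=
  .of_norm_bounded (summable_geometric_of_lt_one (norm_nonneg x) hx) fun n => by
    rw [norm_pow]
    exact pow_le_pow_of_le_one (norm_nonneg x) hx.le Nat.lt_two_pow_self.le

theorem tsum_pow_two_pow_eq_sum_add_tsum [CompleteSpace 𝕜] (hx : ‖x‖ < 1) (N : ℕ) :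
    ∑' n, x ^ 2 ^ n = ∑ n ∈ range N, x ^ 2 ^ n + ∑' n, (x ^ 2 ^ N) ^ 2 ^ n := by
  rw [← (summable_pow_two_pow hx).sum_add_tsum_nat_add N]
  congr 1
  exact tsum_congr fun n => by rw [← pow_mul, ← pow_add, add_comm]

theorem norm_sum_range_pow_two_pow_le (hx : ‖x‖ ≤ 1) (N : ℕ) :
    ‖∑ n ∈ range N, x ^ 2 ^ n‖ ≤ N :=
  calc ‖∑ n ∈ range N, x ^ 2 ^ n‖ ≤ ∑ n ∈ range N, ‖x ^ 2 ^ n‖ := norm_sum_le _ _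
    _ ≤ ∑ _n ∈ range N, (1 : ℝ) := sum_le_sum fun n _ => by
        rw [norm_pow]
        exact pow_le_one₀ (norm_nonneg x) hx
    _ = N := by simp

theorem norm_tsum_pow_two_pow_sub_le [CompleteSpace 𝕜] (hx : ‖x‖ < 1) (N : ℕ) :
    ‖∑' n, (x ^ 2 ^ N) ^ 2 ^ n‖ - N ≤ ‖∑' n, x ^ 2 ^ n‖ := by
  rw [tsum_pow_two_pow_eq_sum_add_tsum hx N]
  linarith [norm_sum_range_pow_two_pow_le hx.le N,
    norm_le_add_norm_add' (∑ n ∈ range N, x ^ 2 ^ n) (∑' n, (x ^ 2 ^ N) ^ 2 ^ n)]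

end LacunarySeries

theorem norm_tsum_ofReal_pow_two_pow {x : ℝ} (hx : 0 ≤ x) :
    ‖∑' n, (x : ℂ) ^ 2 ^ n‖ = ∑' n, x ^ 2 ^ n := by
  simp only [← Complex.ofReal_pow, ← Complex.ofReal_tsum]
  exact Complex.norm_of_nonneg (tsum_nonneg fun n => pow_nonneg hx _)

theorem tendsto_tsum_pow_two_pow_nhdsLT_one :
    Tendsto (fun x : ℝ => ∑' n, x ^ 2 ^ n) (𝓝[<] 1) atTop := by
  refine tendsto_atTop.2 fun M => ?_
  obtain ⟨m, hm⟩ := exists_nat_gt M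
  have partial_sum_gt : ∀ᶠ x in 𝓝 (1 : ℝ), M < ∑ n ∈ range m, x ^ 2 ^ n := by
    have : Continuous fun x : ℝ => ∑ n ∈ range m, x ^ 2 ^ n := by fun_prop
    exact (this.tendsto 1).eventually (eventually_gt_nhds (by simpa using hm))
  filter_upwards [nhdsWithin_le_nhds partial_sum_gt, Ioo_mem_nhdsLT one_pos] with x hM hx
  have hx_norm : ‖x‖ < 1 := by
    rw [Real.norm_of_nonneg hx.1.le]
    exact hx.2
  exact hM.le.trans <|
    (summable_pow_two_pow hx_norm).sum_le_tsum _ fun n _ => pow_nonneg hx.1.le _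

theorem tendsto_pow_nhdsLT_one {n : ℕ} (hn : n ≠ 0) :
    Tendsto (fun x : ℝ => x ^ n) (𝓝[<] 1) (𝓝[<] 1) := by
  refine tendsto_nhdsWithin_of_tendsto_nhds_of_eventually_within _ ?_ ?_
  · simpa using ((continuous_pow n : Continuous fun x : ℝ => x ^ n).tendsto 1).mono_left
      nhdsWithin_le_nhds
  · filter_upwards [Ioo_mem_nhdsLT one_pos] with x hx
    exact pow_lt_one₀ hx.1.le hx.2 hn

theorem exp_two_pi_I_mul_nat_div_pow_self (k n : ℕ) :
    Complex.exp (2 * Real.pi * Complex.I * k / n) ^ n = 1 := by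
  rcases eq_or_ne n 0 with rfl | hn
  · simp
  rw [← Complex.exp_nat_mul, mul_div_cancel₀ _ (Nat.cast_ne_zero.2 hn), mul_comm,
    Complex.exp_nat_mul_two_pi_mul_I]

/-- For every `k N : ℕ`, as `r → 1⁻`, `|h(r·exp(2πik/2^N))| → ∞`,
where `h(z) = ∑ z^(2^n)`. -/
theorem stmt_4 (k N : ℕ) :
    Tendsto
      (fun r : ℝ =>
        ‖∑' n : ℕ, ((r : ℂ) * Complex.exp (2 * Real.pi * Complex.I * k / 2 ^ N)) ^ (2 ^ n)‖)
      (nhdsWithin 1 (Set.Iio 1)) atTop := by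
  set c := Complex.exp (2 * Real.pi * Complex.I * k / 2 ^ N)
  have hc : c ^ 2 ^ N = 1 := by simpa using exp_two_pi_I_mul_nat_div_pow_self k (2 ^ N)
  have hc_norm : ‖c‖ = 1 := Complex.norm_eq_one_of_pow_eq_one hc (Nat.two_pow_pos N).ne'
  have lower : ∀ r ∈ Set.Ioo (0 : ℝ) 1,
      ∑' n, (r ^ 2 ^ N) ^ 2 ^ n - N ≤ ‖∑' n, ((r : ℂ) * c) ^ 2 ^ n‖ := by
    rintro r ⟨hr0, hr1⟩
    have hrc : ‖(r : ℂ) * c‖ < 1 := by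
      rwa [norm_mul, hc_norm, mul_one, Complex.norm_of_nonneg hr0.le]
    have h := norm_tsum_pow_two_pow_sub_le hrc N
    rwa [mul_pow, hc, mul_one, ← Complex.ofReal_pow,
      norm_tsum_ofReal_pow_two_pow (pow_nonneg hr0.le _)] at h
  refine tendsto_atTop_mono' _ ?_ <| tendsto_atTop_add_const_right _ (-(N : ℝ)) <|
    tendsto_tsum_pow_two_pow_nhdsLT_one.comp (tendsto_pow_nhdsLT_one (Nat.two_pow_pos N).ne')
  filter_upwards [Ioo_mem_nhdsLT one_pos] with r hr
  exact lower r hr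
end

section
/- The function h(z) = ∑_{n=0}^∞ z^{2^n} admits no analytic continuation past any point of the unit circle: there is no point p with |p| = 1, no open neighborhood W of p, and no holomorphic function g on W agreeing with h on W ∩ 𝔻 with W ∩ 𝔻 ≠ ∅. -/
/-!
Along the radius ending at a dyadic root of unity `ζ` (`ζ ^ 2 ^ m = 1`), the functional equation
`h z = ∑_{n<m} z ^ 2 ^ n + h (z ^ 2 ^ m)` gives `‖h (r ζ)‖ ≥ h (r ^ 2 ^ m) - m`, and on the real
segment `h r ≥ (N + 1) r ^ 2 ^ N` for every `N`, so `‖h (r ζ)‖ → ∞` as `r → 1⁻`. Dyadic roots of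
unity are dense in the circle, so every neighbourhood of a boundary point contains such a `ζ`, at
which a holomorphic continuation would have to be continuous.
-/

open Metric Filter Topology

noncomputable def lacunarySeries {R : Type*} [Semiring R] [TopologicalSpace R] (z : R) : R :=
  ∑' n : ℕ, z ^ 2 ^ n

section NormedRing

variable {R : Type*} [NormedRing R]

lemma norm_pow_two_pow_le (z : R) (n : ℕ) : ‖z ^ 2 ^ n‖ ≤ ‖z‖ ^ 2 ^ n :=
  norm_pow_le' z (by positivity)

variable [CompleteSpace R]

lemma summable_pow_two_pow_s6 {z : R} (hz : ‖z‖ < 1) : Summable fun n : ℕ => z ^ 2 ^ n :=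
  Summable.of_norm_bounded (summable_geometric_of_lt_one (norm_nonneg z) hz) fun n =>
    (norm_pow_two_pow_le z n).trans
      (pow_le_pow_of_le_one (norm_nonneg z) hz.le Nat.lt_two_pow_self.le)

lemma lacunarySeries_eq_sum_range_add {z : R} (hz : ‖z‖ < 1) (m : ℕ) :
    lacunarySeries z = ∑ n ∈ Finset.range m, z ^ 2 ^ n + lacunarySeries (z ^ 2 ^ m) := by
  rw [lacunarySeries, ← (summable_pow_two_pow_s6 hz).sum_add_tsum_nat_add m, lacunarySeries]
  congr 1
  refine tsum_congr fun n => ?_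
  rw [← pow_mul, ← pow_add, add_comm]

lemma norm_lacunarySeries_sub_le {z : R} (hz : ‖z‖ < 1) (m : ℕ) :
    ‖lacunarySeries z - lacunarySeries (z ^ 2 ^ m)‖ ≤ m := by
  rw [lacunarySeries_eq_sum_range_add hz m, add_sub_cancel_right]
  calc ‖∑ n ∈ Finset.range m, z ^ 2 ^ n‖
      ≤ ∑ n ∈ Finset.range m, ‖z ^ 2 ^ n‖ := norm_sum_le _ _
    _ ≤ ∑ _n ∈ Finset.range m, (1 : ℝ) := Finset.sum_le_sum fun n _ =>
        (norm_pow_two_pow_le z n).trans (pow_le_one₀ (norm_nonneg z) hz.le)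
    _ = m := by simp

end NormedRing

lemma lacunarySeries_nonneg {r : ℝ} (hr : 0 ≤ r) : 0 ≤ lacunarySeries r :=
  tsum_nonneg fun _ => pow_nonneg hr _

lemma le_lacunarySeries {r : ℝ} (h0 : 0 ≤ r) (h1 : r < 1) (N : ℕ) :
    (N + 1) * r ^ 2 ^ N ≤ lacunarySeries r := by
  have hsum : Summable fun n : ℕ => r ^ 2 ^ n :=
    summable_pow_two_pow_s6 (by rwa [Real.norm_of_nonneg h0])
  calc (N + 1 : ℝ) * r ^ 2 ^ N = ∑ _n ∈ Finset.range (N + 1), r ^ 2 ^ N := by simp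
    _ ≤ ∑ n ∈ Finset.range (N + 1), r ^ 2 ^ n := Finset.sum_le_sum fun n hn =>
        pow_le_pow_of_le_one h0 h1.le
          (Nat.pow_le_pow_right two_pos (Nat.lt_succ_iff.mp (Finset.mem_range.mp hn)))
    _ ≤ lacunarySeries r := hsum.sum_le_tsum _ fun n _ => pow_nonneg h0 _

lemma tendsto_lacunarySeries_atTop :
    Tendsto (lacunarySeries : ℝ → ℝ) (𝓝[<] 1) atTop := by
  refine tendsto_atTop.2 fun C => ?_
  obtain ⟨N, hN⟩ := exists_nat_gt C
  have hlim : Tendsto (fun r : ℝ => (N + 1 : ℝ) * r ^ 2 ^ N) (𝓝[<] 1) (𝓝 (N + 1)) :=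
    ((by fun_prop : Continuous fun r : ℝ => (N + 1 : ℝ) * r ^ 2 ^ N).tendsto' 1 _
      (by simp)).mono_left nhdsWithin_le_nhds
  filter_upwards [hlim.eventually_const_le (by linarith), Ioo_mem_nhdsLT one_pos]
    with r hC hr
  exact hC.trans (le_lacunarySeries hr.1.le hr.2 N)

lemma lacunarySeries_ofReal (r : ℝ) : ((lacunarySeries r : ℝ) : ℂ) = lacunarySeries (r : ℂ) := by
  simp only [lacunarySeries, Complex.ofReal_tsum, Complex.ofReal_pow]

lemma tendsto_pow_nhdsLT_one_s6 (k : ℕ) (hk : k ≠ 0) :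
    Tendsto (fun r : ℝ => r ^ k) (𝓝[<] 1) (𝓝[<] 1) := by
  refine tendsto_nhdsWithin_iff.2 ⟨?_, ?_⟩
  · exact ((continuous_pow k).tendsto' 1 1 (one_pow k)).mono_left nhdsWithin_le_nhds
  · filter_upwards [Ioo_mem_nhdsLT one_pos] with r hr
    exact pow_lt_one₀ hr.1.le hr.2 hk

lemma tendsto_ofReal_mul_nhdsWithin_ball {ζ : ℂ} (hζ : ‖ζ‖ = 1) :
    Tendsto (fun r : ℝ => (r : ℂ) * ζ) (𝓝[<] 1) (𝓝[ball 0 1] ζ) := by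
  refine tendsto_nhdsWithin_iff.2 ⟨?_, ?_⟩
  · exact ((by fun_prop : Continuous fun r : ℝ => (r : ℂ) * ζ).tendsto' 1 ζ
      (by simp)).mono_left nhdsWithin_le_nhds
  · filter_upwards [Ioo_mem_nhdsLT one_pos] with r hr
    rw [mem_ball_zero_iff, norm_mul, hζ, mul_one, Complex.norm_of_nonneg hr.1.le]
    exact hr.2

lemma tendsto_norm_lacunarySeries_of_pow_two_pow_eq_one {ζ : ℂ} {m : ℕ} (hζ : ζ ^ 2 ^ m = 1) :
    Tendsto (fun r : ℝ => ‖lacunarySeries ((r : ℂ) * ζ)‖) (𝓝[<] 1) atTop := by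
  have hζ1 : ‖ζ‖ = 1 := Complex.norm_eq_one_of_pow_eq_one hζ (by positivity)
  have hreal : Tendsto (fun r : ℝ => lacunarySeries (r ^ 2 ^ m) - m) (𝓝[<] 1) atTop :=
    tendsto_atTop_add_const_right _ _
      (tendsto_lacunarySeries_atTop.comp (tendsto_pow_nhdsLT_one_s6 _ (by positivity)))
  refine tendsto_atTop_mono' _ ?_ hreal
  filter_upwards [Ioo_mem_nhdsLT one_pos,
    (tendsto_ofReal_mul_nhdsWithin_ball hζ1).eventually_mem self_mem_nhdsWithin] with r hr hz
  set w : ℂ := ((r ^ 2 ^ m : ℝ) : ℂ)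
  have hpow : ((r : ℂ) * ζ) ^ 2 ^ m = w := by
    rw [mul_pow, hζ, mul_one, ← Complex.ofReal_pow]
  have hnorm : ‖lacunarySeries w‖ = lacunarySeries (r ^ 2 ^ m) := by
    rw [← lacunarySeries_ofReal, Complex.norm_of_nonneg
      (lacunarySeries_nonneg (pow_nonneg hr.1.le _))]
  have hdiff := norm_lacunarySeries_sub_le (mem_ball_zero_iff.1 hz) m
  rw [hpow, norm_sub_rev] at hdiff
  rw [← hnorm]
  linarith [norm_sub_norm_le (lacunarySeries w) (lacunarySeries ((r : ℂ) * ζ))]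

lemma exists_dyadic_near (x : ℝ) {δ : ℝ} (hδ : 0 < δ) :
    ∃ (k : ℤ) (m : ℕ), |k / 2 ^ m - x| < δ := by
  obtain ⟨m, hm⟩ := exists_pow_lt_of_lt_one hδ (by norm_num : (1 / 2 : ℝ) < 1)
  refine ⟨round (x * 2 ^ m), m, ?_⟩
  have h2m : (0 : ℝ) < 2 ^ m := by positivity
  calc |round (x * 2 ^ m) / 2 ^ m - x| = |x * 2 ^ m - round (x * 2 ^ m)| / 2 ^ m := by
        rw [abs_sub_comm, sub_div' h2m.ne', abs_div, abs_of_pos h2m]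
    _ ≤ 1 / 2 / 2 ^ m := by gcongr; exact abs_sub_round _
    _ ≤ (1 / 2) ^ m := by rw [div_pow, one_pow]; gcongr; norm_num
    _ < δ := hm

lemma exists_pow_two_pow_eq_one_near {p : ℂ} (hp : ‖p‖ = 1) {ε : ℝ} (hε : 0 < ε) :
    ∃ (ζ : ℂ) (m : ℕ), ζ ^ 2 ^ m = 1 ∧ dist ζ p < ε := by
  set e : ℝ → ℂ := fun t => Complex.exp (2 * Real.pi * t * Complex.I)
  have hpe : e (p.arg / (2 * Real.pi)) = p := by
    conv_rhs => rw [← Complex.norm_mul_exp_arg_mul_I p, hp]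
    simp only [e, Complex.ofReal_div, Complex.ofReal_mul, Complex.ofReal_ofNat,
      Complex.ofReal_one, one_mul]
    field_simp
  obtain ⟨δ, hδ, he⟩ := Metric.continuous_iff.1 (by fun_prop : Continuous e)
    (p.arg / (2 * Real.pi)) ε hε
  obtain ⟨k, m, hkm⟩ := exists_dyadic_near (p.arg / (2 * Real.pi)) hδ
  refine ⟨e (k / 2 ^ m), m, ?_, hpe ▸ he _ (by rwa [Real.dist_eq])⟩
  rw [← Complex.exp_nat_mul, ← Complex.exp_int_mul_two_pi_mul_I k]
  congr 1
  push_cast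
  field_simp

/-- `h(z) = ∑ z^(2^n)` admits no analytic continuation past any point of the unit circle. -/
theorem stmt_6 (h : ℂ → ℂ) (hh : ∀ z : ℂ, h z = ∑' n : ℕ, z ^ (2 ^ n)) :
    ¬ ∃ (p : ℂ) (W : Set ℂ) (g : ℂ → ℂ),
        ‖p‖ = 1 ∧ IsOpen W ∧ p ∈ W ∧ DifferentiableOn ℂ g W ∧
        (W ∩ ball (0 : ℂ) 1).Nonempty ∧ Set.EqOn g h (W ∩ ball (0 : ℂ) 1) := by
  rintro ⟨p, W, g, hp, hW, hpW, hg, -, hgh⟩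
  obtain ⟨ε, hε, hball⟩ := Metric.isOpen_iff.1 hW p hpW
  obtain ⟨ζ, m, hζ, hζp⟩ := exists_pow_two_pow_eq_one_near hp hε
  have hWζ : W ∈ 𝓝 ζ := hW.mem_nhds (hball hζp)
  have hray := tendsto_ofReal_mul_nhdsWithin_ball
    (Complex.norm_eq_one_of_pow_eq_one hζ (by positivity))
  have hg_lim : Tendsto (fun r : ℝ => ‖g ((r : ℂ) * ζ)‖) (𝓝[<] 1) (𝓝 ‖g ζ‖) :=
    (hg.continuousOn.continuousAt hWζ).norm.tendsto.comp (hray.mono_right nhdsWithin_le_nhds)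
  have hgh_ray : ∀ᶠ r : ℝ in 𝓝[<] 1, ‖g ((r : ℂ) * ζ)‖ = ‖lacunarySeries ((r : ℂ) * ζ)‖ :=
    (hray.eventually_mem (inter_mem_nhdsWithin _ hWζ)).mono fun r hr => by
      rw [hgh ⟨hr.2, hr.1⟩, hh, lacunarySeries]
  exact not_tendsto_atTop_of_tendsto_nhds (hg_lim.congr' hgh_ray)
    (tendsto_norm_lacunarySeries_of_pow_two_pow_eq_one hζ)
end

section
/- The integral G(z) = ∫_C exp(−2πiuz + iπu²)·Γ(u) du over the line C : t ↦ 1 + (1+i)t, t ∈ ℝ, converges absolutely for every z ∈ ℂ and defines an entire function. -/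
/-!
On the line `u = 1 + (1 + i) t` the factor `exp (iπu²)` has modulus `exp (-2π t² - 2π t)`, a
Gaussian in `t`. Against it, `Γ` grows at most like `exp (2 t² + |t|)`: for `t ≥ 0` this is
`|Γ u| ≤ Γ (1 + t)` and a crude estimate of Euler's integral, and for `t < 0` the recurrence
`Γ (u + 1) = u Γ u` moves `u` into the right half-plane at the cost of a factor `2` per step.
Since `2 < 2π`, the weight `w t = exp (iπu²) Γ(u) (1 + i)` decays faster than every exponential
`exp (R |t|)`, so `G z = ∫ exp (-2πi u(t) z) w t dt` is a Laplace transform of a rapidly decaying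
function, which converges absolutely and can be differentiated under the integral sign.
-/

open MeasureTheory Complex Real Set

section LaplaceTransform

variable {α : Type*} [MeasurableSpace α] {μ : Measure α} {c g : α → ℂ}

lemma norm_cexp_mul_le (a z : ℂ) : ‖cexp (a * z)‖ ≤ rexp (‖z‖ * ‖a‖) :=
  (norm_exp_le_exp_norm _).trans_eq (by rw [norm_mul, mul_comm])

lemma aestronglyMeasurable_cexp_mul_mul (hc : AEStronglyMeasurable c μ)
    (hg : AEStronglyMeasurable g μ) (z : ℂ) :
    AEStronglyMeasurable (fun x => cexp (c x * z) * g x) μ :=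
  (continuous_exp.comp_aestronglyMeasurable (hc.mul_const z)).mul hg

theorem integrable_cexp_mul_mul (hc : AEStronglyMeasurable c μ) (hg : AEStronglyMeasurable g μ)
    (hdecay : ∀ R, 0 ≤ R → Integrable (fun x => rexp (R * ‖c x‖) * ‖g x‖) μ) (z : ℂ) :
    Integrable (fun x => cexp (c x * z) * g x) μ := by
  refine (hdecay ‖z‖ (norm_nonneg z)).mono' (aestronglyMeasurable_cexp_mul_mul hc hg z)
    (ae_of_all _ fun x => ?_)
  rw [norm_mul]
  gcongr
  exact norm_cexp_mul_le _ _

theorem differentiable_integral_cexp_mul_mul (hc : AEStronglyMeasurable c μ)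
    (hg : AEStronglyMeasurable g μ)
    (hdecay : ∀ R, 0 ≤ R → Integrable (fun x => rexp (R * ‖c x‖) * ‖g x‖) μ) :
    Differentiable ℂ (fun z => ∫ x, cexp (c x * z) * g x ∂μ) := by
  intro z₀
  refine (hasDerivAt_integral_of_dominated_loc_of_deriv_le
    (F' := fun z x => c x * (cexp (c x * z) * g x))
    (bound := fun x => rexp ((‖z₀‖ + 2) * ‖c x‖) * ‖g x‖) (Metric.ball_mem_nhds z₀ one_pos)
    (.of_forall (aestronglyMeasurable_cexp_mul_mul hc hg)) (integrable_cexp_mul_mul hc hg hdecay z₀)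
    (hc.mul (aestronglyMeasurable_cexp_mul_mul hc hg z₀)) (ae_of_all _ fun x z hz => ?_)
    (hdecay _ (by positivity)) (ae_of_all _ fun x z _ => ?_)).2.differentiableAt
  · have hz : ‖z‖ ≤ ‖z₀‖ + 1 := by
      have := norm_le_norm_add_norm_sub' z z₀
      rw [Metric.mem_ball, dist_eq_norm] at hz
      linarith
    calc ‖c x * (cexp (c x * z) * g x)‖ = ‖c x‖ * ‖cexp (c x * z)‖ * ‖g x‖ := by
          rw [norm_mul, norm_mul, mul_assoc]
      _ ≤ rexp ‖c x‖ * rexp ((‖z₀‖ + 1) * ‖c x‖) * ‖g x‖ := by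
          gcongr
          · exact (add_one_le_exp _).trans' (by linarith)
          · exact (norm_cexp_mul_le _ _).trans (by gcongr)
      _ = rexp ((‖z₀‖ + 2) * ‖c x‖) * ‖g x‖ := by rw [← Real.exp_add]; ring_nf
  · exact (((hasDerivAt_id' z).const_mul (c x)).cexp.mul_const (g x)).congr_deriv (by ring)

end LaplaceTransform

lemma Complex.norm_Gamma_le_Gamma_re {s : ℂ} (hs : 0 < s.re) : ‖Gamma s‖ ≤ Real.Gamma s.re := by
  rw [Gamma_eq_integral hs, Real.Gamma_eq_integral hs, GammaIntegral]
  refine (norm_integral_le_integral_norm _).trans_eq (setIntegral_congr_fun measurableSet_Ioi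
    fun x (hx : 0 < x) => ?_)
  rw [norm_mul, norm_cpow_eq_rpow_re_of_pos hx, norm_real, norm_of_nonneg (exp_pos _).le, sub_re,
    one_re]

lemma Complex.pow_mul_norm_Gamma_le_norm_Gamma_add_nat {s : ℂ} {δ : ℝ} (hδ : 0 < δ) (n : ℕ)
    (h : ∀ k < n, δ ≤ ‖s + k‖) : δ ^ n * ‖Gamma s‖ ≤ ‖Gamma (s + n)‖ := by
  induction n with
  | zero => simp
  | succ n ih =>
    have hn : δ ≤ ‖s + n‖ := h n n.lt_succ_self
    calc δ ^ (n + 1) * ‖Gamma s‖ = δ * (δ ^ n * ‖Gamma s‖) := by ring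
      _ ≤ ‖s + n‖ * ‖Gamma (s + n)‖ := by
          gcongr
          exact ih fun k hk => h k (hk.trans n.lt_succ_self)
      _ = ‖Gamma (s + ↑(n + 1))‖ := by
          rw [← norm_mul, ← Gamma_add_one _ (norm_pos_iff.mp (hδ.trans_le hn)), Nat.cast_succ,
            add_assoc]

lemma mul_log_le_div_two_add_two_mul_sq_add {x s : ℝ} (hx : 0 ≤ x) (hs : 0 < s) :
    x * Real.log s ≤ s / 2 + 2 * x ^ 2 + x := by
  have hc : 0 < 2 * x + 2 := by linarith
  have h₁ : Real.log s - Real.log (2 * x + 2) ≤ s / (2 * x + 2) - 1 := by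
    rw [← log_div hs.ne' hc.ne']
    exact log_le_sub_one_of_pos (by positivity)
  have h₂ : Real.log (2 * x + 2) ≤ 2 * x + 1 := by linarith [log_le_sub_one_of_pos hc]
  have h₃ : x * (s / (2 * x + 2)) ≤ s / 2 := by
    rw [mul_div_assoc', div_le_div_iff₀ hc two_pos]
    nlinarith
  nlinarith [mul_le_mul_of_nonneg_left
    (show Real.log s ≤ s / (2 * x + 2) + 2 * x + 1 by linarith) hx]

lemma Real.Gamma_one_add_le {x : ℝ} (hx : 0 ≤ x) :
    Real.Gamma (1 + x) ≤ 2 * rexp (2 * x ^ 2 + x) := by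
  have hpos : 0 < 1 + x := by linarith
  have hpt : ∀ s ∈ Ioi (0 : ℝ), rexp (-s) * s ^ (1 + x - 1) ≤
      rexp (2 * x ^ 2 + x) * rexp (-(1 / 2) * s) := by
    intro s (hs : 0 < s)
    rw [add_sub_cancel_left, rpow_def_of_pos hs, ← Real.exp_add, ← Real.exp_add]
    exact exp_le_exp.2 (by linarith [mul_log_le_div_two_add_two_mul_sq_add hx hs])
  calc Real.Gamma (1 + x) ≤ ∫ s in Ioi (0 : ℝ), rexp (2 * x ^ 2 + x) * rexp (-(1 / 2) * s) := by
        rw [Real.Gamma_eq_integral hpos]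
        exact setIntegral_mono_on (Real.GammaIntegral_convergent hpos)
          ((exp_neg_integrableOn_Ioi 0 one_half_pos).const_mul _) measurableSet_Ioi hpt
    _ = 2 * rexp (2 * x ^ 2 + x) := by
        rw [integral_const_mul, integral_exp_mul_Ioi (by norm_num) 0]
        norm_num [mul_comm]

lemma one_add_one_add_I_mul_ne_neg_nat (t : ℝ) (m : ℕ) : 1 + (1 + I) * t ≠ -m := by
  intro h
  have him : t = 0 := by simpa using congrArg im h
  have hre := congrArg re h
  simp [him] at hre
  linarith [(m.cast_nonneg : (0 : ℝ) ≤ m)]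

lemma norm_one_add_I_le_two : ‖(1 : ℂ) + I‖ ≤ 2 :=
  (norm_add_le _ _).trans (by simp; norm_num)

lemma norm_one_add_one_add_I_mul_le (t : ℝ) : ‖1 + (1 + I) * t‖ ≤ 1 + 2 * |t| := by
  have := norm_one_add_I_le_two
  calc ‖1 + (1 + I) * t‖ ≤ 1 + ‖1 + I‖ * |t| := by
        simpa [norm_mul] using norm_add_le (1 : ℂ) ((1 + I) * t)
    _ ≤ 1 + 2 * |t| := by gcongr

lemma norm_Gamma_one_add_one_add_I_mul_le (t : ℝ) :
    ‖Gamma (1 + (1 + I) * t)‖ ≤ 2 * rexp (2 * t ^ 2 + |t| + 4) := by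
  set u : ℂ := 1 + (1 + I) * t
  have hre : u.re = 1 + t := by simp [u]
  have him : u.im = t := by simp [u]
  rcases le_or_gt 0 t with ht | ht
  · calc ‖Gamma u‖ ≤ Real.Gamma (1 + t) := hre ▸ norm_Gamma_le_Gamma_re (by linarith)
      _ ≤ 2 * rexp (2 * t ^ 2 + t) := Real.Gamma_one_add_le ht
      _ ≤ 2 * rexp (2 * t ^ 2 + |t| + 4) := by gcongr 2 * rexp ?_; linarith [le_abs_self t]
  set n := ⌈-t⌉₊
  have hn₁ : -t ≤ n := Nat.le_ceil _
  have hn₂ : (n : ℝ) < -t + 1 := Nat.ceil_lt_add_one (by linarith)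
  -- `|u + k|² = (1 + t + k)² + t² ≥ (1 + k)² / 2`
  have hfactor : ∀ k < n, (1 / 2 : ℝ) ≤ ‖u + k‖ := by
    intro k _
    refine le_of_pow_le_pow_left₀ two_ne_zero (norm_nonneg _) ?_
    rw [Complex.sq_norm, normSq_apply]
    simp only [add_re, add_im, natCast_re, natCast_im, hre, him]
    nlinarith [sq_nonneg (2 * t + 1 + k), (k.cast_nonneg : (0 : ℝ) ≤ k)]
  have hshift : ‖Gamma (u + n)‖ ≤ 2 * rexp 3 := by
    have hre' : (u + n).re = 1 + (t + n) := by simp [hre]; ring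
    calc ‖Gamma (u + n)‖ ≤ Real.Gamma (1 + (t + n)) :=
          hre' ▸ norm_Gamma_le_Gamma_re (by linarith)
      _ ≤ 2 * rexp (2 * (t + n) ^ 2 + (t + n)) := Real.Gamma_one_add_le (by linarith)
      _ ≤ 2 * rexp 3 := by gcongr; nlinarith
  have hpow : (2 : ℝ) ^ n ≤ rexp (|t| + 1) :=
    calc (2 : ℝ) ^ n ≤ rexp 1 ^ n := by gcongr; linarith [add_one_le_exp 1]
      _ = rexp n := exp_one_pow n
      _ ≤ rexp (|t| + 1) := by gcongr; rw [abs_of_neg ht]; linarith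
  calc ‖Gamma u‖ = 2 ^ n * ((1 / 2) ^ n * ‖Gamma u‖) := by
        rw [← mul_assoc, ← mul_pow]; norm_num
    _ ≤ rexp (|t| + 1) * (2 * rexp 3) := mul_le_mul hpow
        ((pow_mul_norm_Gamma_le_norm_Gamma_add_nat one_half_pos n hfactor).trans hshift)
        (by positivity) (by positivity)
    _ = 2 * rexp (|t| + 4) := by rw [mul_left_comm, ← Real.exp_add]; ring_nf
    _ ≤ 2 * rexp (2 * t ^ 2 + |t| + 4) := by gcongr; nlinarith [sq_nonneg t]

lemma integrable_exp_neg_mul_sq_add_mul_abs {a : ℝ} (ha : 0 < a) (b c : ℝ) :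
    Integrable fun t : ℝ => rexp (-a * t ^ 2 + b * |t| + c) := by
  refine ((integrable_exp_neg_mul_sq (half_pos ha)).const_mul (rexp (c + b ^ 2 / (2 * a)))).mono'
    (by fun_prop) (ae_of_all _ fun t => ?_)
  have amgm : b * |t| ≤ a / 2 * t ^ 2 + b ^ 2 / (2 * a) := by
    have : a / 2 * |t| ^ 2 + b ^ 2 / (2 * a) - b * |t| = (a * |t| - b) ^ 2 / (2 * a) := by
      field_simp
      ring
    rw [← sq_abs t, ← sub_nonneg, this]
    positivity
  rw [norm_of_nonneg (exp_pos _).le, ← Real.exp_add]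
  exact exp_le_exp.2 (by linarith)

noncomputable def hurwitzWeight (t : ℝ) : ℂ :=
  cexp (π * I * (1 + (1 + I) * t) ^ 2) * Gamma (1 + (1 + I) * t) * (1 + I)

lemma continuous_hurwitzWeight : Continuous hurwitzWeight := by
  have hGamma : Continuous fun t : ℝ => Gamma (1 + (1 + I) * t) :=
    continuous_iff_continuousAt.2 fun t =>
      (differentiableAt_Gamma _ (one_add_one_add_I_mul_ne_neg_nat t)).continuousAt.comp
        (f := fun s : ℝ => 1 + (1 + I) * (s : ℂ)) (by fun_prop)
  unfold hurwitzWeight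
  fun_prop

lemma norm_cexp_pi_mul_I_mul_sq (w : ℂ) :
    ‖cexp (π * I * w ^ 2)‖ = rexp (-(2 * π * w.re * w.im)) := by
  rw [norm_exp]
  congr 1
  simp [sq, mul_re, mul_im]
  ring

lemma norm_hurwitzWeight_le (t : ℝ) :
    ‖hurwitzWeight t‖ ≤ 4 * rexp (-(2 * π - 2) * t ^ 2 + (2 * π + 1) * |t| + 4) := by
  have := norm_one_add_I_le_two
  rw [hurwitzWeight, norm_mul, norm_mul, norm_cexp_pi_mul_I_mul_sq]
  calc _ ≤ rexp (-(2 * π) * t ^ 2 + 2 * π * |t|) * (2 * rexp (2 * t ^ 2 + |t| + 4)) * 2 := by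
        gcongr
        · simp only [add_re, add_im, one_re, one_im, mul_re, mul_im, I_re, I_im, ofReal_re,
            ofReal_im]
          nlinarith [neg_abs_le t, pi_pos]
        · exact norm_Gamma_one_add_one_add_I_mul_le t
    _ = 4 * (rexp (-(2 * π) * t ^ 2 + 2 * π * |t|) * rexp (2 * t ^ 2 + |t| + 4)) := by ring
    _ = _ := by rw [← Real.exp_add]; ring_nf

lemma integrable_exp_mul_norm_mul_norm_hurwitzWeight {R : ℝ} (hR : 0 ≤ R) :
    Integrable fun t : ℝ =>
      rexp (R * ‖-2 * π * I * (1 + (1 + I) * t)‖) * ‖hurwitzWeight t‖ := by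
  have ha : 0 < 2 * π - 2 := by linarith [pi_gt_three]
  refine ((integrable_exp_neg_mul_sq_add_mul_abs ha (4 * π * R + 2 * π + 1)
    (2 * π * R + 4)).const_mul 4).mono' ?_ (ae_of_all _ fun t => ?_)
  · have := continuous_hurwitzWeight
    exact Continuous.aestronglyMeasurable (by fun_prop)
  have hc : ‖-2 * π * I * (1 + (1 + I) * t)‖ ≤ 2 * π * (1 + 2 * |t|) := by
    simpa [norm_mul, abs_of_pos pi_pos] using
      mul_le_mul_of_nonneg_left (norm_one_add_one_add_I_mul_le t) (by positivity : 0 ≤ 2 * π)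
  rw [norm_mul, norm_of_nonneg (exp_pos _).le, norm_norm]
  calc _ ≤ rexp (R * (2 * π * (1 + 2 * |t|))) *
        (4 * rexp (-(2 * π - 2) * t ^ 2 + (2 * π + 1) * |t| + 4)) := by
        gcongr
        exact norm_hurwitzWeight_le t
    _ = 4 * (rexp (R * (2 * π * (1 + 2 * |t|))) *
        rexp (-(2 * π - 2) * t ^ 2 + (2 * π + 1) * |t| + 4)) := by ring
    _ = _ := by rw [← Real.exp_add]; ring_nf

/-- The Laplace-type integral `G(z) = ∫_C exp(−2πiuz + iπu²) Γ(u) du` over the line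
`C : t ↦ 1 + (1+i)t` converges absolutely for every `z` and defines an entire function. -/
theorem stmt_14 :
    (∀ z : ℂ,
        Integrable
          (fun t : ℝ =>
            Complex.exp (-2 * Real.pi * I * (1 + (1 + I) * t) * z +
                Real.pi * I * (1 + (1 + I) * t) ^ 2) *
              Complex.Gamma (1 + (1 + I) * t) * (1 + I))) ∧
    Differentiable ℂ
      (fun z : ℂ =>
        ∫ t : ℝ,
          Complex.exp (-2 * Real.pi * I * (1 + (1 + I) * t) * z +
              Real.pi * I * (1 + (1 + I) * t) ^ 2) *
            Complex.Gamma (1 + (1 + I) * t) * (1 + I)) := by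
  set c : ℝ → ℂ := fun t => -2 * π * I * (1 + (1 + I) * t)
  have hsplit : ∀ z : ℂ, (fun t : ℝ => cexp (-2 * π * I * (1 + (1 + I) * t) * z +
      π * I * (1 + (1 + I) * t) ^ 2) * Gamma (1 + (1 + I) * t) * (1 + I)) =
      fun t => cexp (c t * z) * hurwitzWeight t := fun z => funext fun t => by
    simp only [c, hurwitzWeight, Complex.exp_add]
    ring
  have hc : AEStronglyMeasurable c := Continuous.aestronglyMeasurable (by fun_prop)
  have hw := continuous_hurwitzWeight.aestronglyMeasurable (μ := volume)
  have hdecay := fun R (hR : 0 ≤ R) => integrable_exp_mul_norm_mul_norm_hurwitzWeight hR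
  simp only [hsplit]
  exact ⟨integrable_cexp_mul_mul hc hw hdecay, differentiable_integral_cexp_mul_mul hc hw hdecay⟩
end
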